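/- Let d ≥ 1 and v ∈ ℝ^d with |v| < 1. For x ∈ ℝ^d, x ≠ 0, define G_v(x) = ∫_0^∞ e^{−t} t ((1−|v|²)t² + |x|² + 2 i t (v·x))^{−(d+1)/2} dt, where z ↦ z^{−(d+1)/2} denotes the principal branch of the complex power (note the base has real part (1−|v|²)t² + |x|² > 0, so its modulus is at least (1−|v|²)t² + |x|², and the integral converges absolutely). Then there is a constant C > 0 depending only on d and |v| such that: (i) |G_v(x)| ≤ C |x|^{−(d+1)} for all x with |x| ≥ 1; (ii) if d ≥ 2, then |G_v(x)| ≤ C |x|^{−(d−1)} for all x ≠ 0, while if d = 1, then |G_v(x)| ≤ C (1 + |log|x||) for all x ≠ 0. -/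

import Mathlib

noncomputable section

open MeasureTheory Filter Complex
open scoped RealInnerProductSpace ENNReal

abbrev Ed (d : ℕ) := EuclideanSpace ℝ (Fin d)

/-- The resolvent kernel
`G_v(x) = ∫_0^∞ e^{-t} t ((1-|v|²)t² + |x|² + 2it(v·x))^{-(d+1)/2} dt`,
with the principal branch of the complex power. -/
def Gv {d : ℕ} (v : Ed d) (x : Ed d) : ℂ :=
  ∫ t in Set.Ioi (0 : ℝ),
    ((Real.exp (-t) * t : ℝ) : ℂ) *
      ((((1 - ‖v‖ ^ 2) * t ^ 2 + ‖x‖ ^ 2 : ℝ) : ℂ) + 2 * Complex.I * (t : ℂ) * ((⟪v, x⟫ : ℝ) : ℂ))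
        ^ ((-(((d : ℝ) + 1) / 2) : ℝ) : ℂ)

/-!
The base `z = (1 - |v|²) t² + |x|² + 2 i t (v·x)` of the power has `Re z ≥ (1 - |v|²) t² + |x|²`,
so `|z ^ (-(d+1)/2)| ≤ (Re z) ^ (-(d+1)/2)` and every bound reduces to a real integral.
Using only `Re z ≥ |x|²` gives `|G_v(x)| ≤ |x|^{-(d+1)} ∫ e^{-t} t dt = |x|^{-(d+1)}`.
For the local bounds split at `t = |x|`: below it, `Re z ≥ |x|²` and `e^{-t} ≤ 1` contribute
`|x|^{1-d}/2`; above it, `Re z ≥ (1 - |v|²) t²` leaves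
`(1 - |v|²)^{-(d+1)/2} ∫_{|x|}^∞ e^{-t} t^{-d} dt`, which is at most `|x|^{1-d}/(d-1)` for `d ≥ 2`
and `1 + |log |x||` for `d = 1`.
-/

open Real Set

lemma Complex.norm_cpow_ofReal_le {z : ℂ} {s R : ℝ} (hs : s ≤ 0) (hR : 0 < R) (hRz : R ≤ z.re) :
    ‖z ^ (s : ℂ)‖ ≤ R ^ s := by
  rw [norm_cpow_real]
  exact rpow_le_rpow_of_nonpos hR (hRz.trans (re_le_norm z)) hs

lemma sq_rpow_neg_half {r : ℝ} (hr : 0 ≤ r) (s : ℝ) : (r ^ 2) ^ (-(s / 2)) = r ^ (-s) := by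
  rw [← rpow_natCast r 2, ← rpow_mul hr]
  ring_nf

lemma integral_exp_neg_mul_id : ∫ t in Ioi (0 : ℝ), Real.exp (-t) * t = 1 := by
  have h := (Gamma_eq_integral (by norm_num : (0 : ℝ) < 2)).symm
  norm_num at h
  exact h

lemma integrableOn_exp_neg_mul_id : IntegrableOn (fun t : ℝ => Real.exp (-t) * t) (Ioi 0) := by
  have h := GammaIntegral_convergent (by norm_num : (0 : ℝ) < 2)
  norm_num at h
  exact h

lemma integrableOn_exp_neg_mul_rpow_neg {r s : ℝ} (hr : 0 < r) (hs : 0 ≤ s) :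
    IntegrableOn (fun t : ℝ => Real.exp (-t) * t ^ (-s)) (Ioi r) := by
  refine Integrable.mono' ((integrableOn_exp_neg_Ioi r).mul_const (r ^ (-s)))
    (by fun_prop : Measurable fun t : ℝ => Real.exp (-t) * t ^ (-s)).aestronglyMeasurable ?_
  filter_upwards [ae_restrict_mem measurableSet_Ioi] with t (ht : r < t)
  have ht0 : 0 < t := hr.trans ht
  rw [norm_of_nonneg (by positivity)]
  exact mul_le_mul_of_nonneg_left (rpow_le_rpow_of_nonpos hr ht.le (neg_nonpos.mpr hs))
    (exp_pos _).le

lemma integral_exp_neg_mul_rpow_neg_le {r s : ℝ} (hr : 0 < r) (hs : 1 < s) :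
    ∫ t in Ioi r, Real.exp (-t) * t ^ (-s) ≤ r ^ (1 - s) / (s - 1) := by
  have hs' : -s < -1 := by linarith
  calc ∫ t in Ioi r, Real.exp (-t) * t ^ (-s) ≤ ∫ t in Ioi r, t ^ (-s) := by
        refine setIntegral_mono_on (integrableOn_exp_neg_mul_rpow_neg hr (by linarith))
          (integrableOn_Ioi_rpow_of_lt hs' hr) measurableSet_Ioi fun t (ht : r < t) => ?_
        exact mul_le_of_le_one_left (rpow_nonneg (hr.trans ht).le _)
          (exp_le_one_iff.mpr (by linarith))
    _ = r ^ (1 - s) / (s - 1) := by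
        rw [integral_Ioi_rpow_of_lt hs' hr, ← neg_div_neg_eq, neg_neg]
        ring_nf

-- Split at `max r 1`: below it `exp (-t) ≤ 1`, above it `t⁻¹ ≤ 1`.
lemma integral_exp_neg_mul_inv_le {r : ℝ} (hr : 0 < r) :
    ∫ t in Ioi r, Real.exp (-t) * t⁻¹ ≤ 1 + |Real.log r| := by
  set m := max r 1
  have hrm : r ≤ m := le_max_left r 1
  have hm : 0 < m := hr.trans_le hrm
  have hint : IntegrableOn (fun t : ℝ => Real.exp (-t) * t⁻¹) (Ioi r) := by
    simpa [rpow_neg_one] using integrableOn_exp_neg_mul_rpow_neg hr zero_le_one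
  have hinv : IntegrableOn (fun t : ℝ => t⁻¹) (Ioc r m) := by
    rw [← intervalIntegrable_iff_integrableOn_Ioc_of_le hrm]
    exact intervalIntegral.intervalIntegrable_inv
      (fun t ht => ((uIcc_of_le hrm ▸ ht).1.trans_lt' hr).ne') continuousOn_id
  have hnear : ∫ t in Ioc r m, Real.exp (-t) * t⁻¹ ≤ Real.log (m / r) := by
    rw [← integral_inv (by rw [uIcc_of_le hrm]; exact fun h => (h.1.trans_lt' hr).false),
      intervalIntegral.integral_of_le hrm]
    refine setIntegral_mono_on (hint.mono_set Ioc_subset_Ioi_self) hinv measurableSet_Ioc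
      fun t ht => ?_
    exact mul_le_of_le_one_left (inv_nonneg.mpr (hr.trans ht.1).le)
      (exp_le_one_iff.mpr (by linarith [hr.trans ht.1]))
  have hfar : ∫ t in Ioi m, Real.exp (-t) * t⁻¹ ≤ 1 := by
    calc ∫ t in Ioi m, Real.exp (-t) * t⁻¹ ≤ ∫ t in Ioi m, Real.exp (-t) := by
          refine setIntegral_mono_on (hint.mono_set (Ioi_subset_Ioi hrm))
            (integrableOn_exp_neg_Ioi m) measurableSet_Ioi fun t (ht : m < t) => ?_
          exact mul_le_of_le_one_right (exp_pos _).le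
            (inv_le_one_of_one_le₀ ((le_max_right r 1).trans ht.le))
      _ = Real.exp (-m) := integral_exp_neg_Ioi m
      _ ≤ 1 := exp_le_one_iff.mpr (by linarith)
  have hlog : Real.log (m / r) ≤ |Real.log r| := by
    rw [log_div hm.ne' hr.ne']
    rcases le_total r 1 with h | h
    · simp [m, max_eq_right h, neg_le_abs]
    · simp [m, max_eq_left h]
  rw [← Ioc_union_Ioi_eq_Ioi hrm, setIntegral_union (Ioc_disjoint_Ioi le_rfl) measurableSet_Ioi
    (hint.mono_set Ioc_subset_Ioi_self) (hint.mono_set (Ioi_subset_Ioi hrm))]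
  linarith

section Kernel

variable {d : ℕ} (v x : Ed d)

def gvIntegrand (t : ℝ) : ℂ :=
  ((Real.exp (-t) * t : ℝ) : ℂ) *
    ((((1 - ‖v‖ ^ 2) * t ^ 2 + ‖x‖ ^ 2 : ℝ) : ℂ) + 2 * Complex.I * (t : ℂ) * ((⟪v, x⟫ : ℝ) : ℂ))
      ^ ((-(((d : ℝ) + 1) / 2) : ℝ) : ℂ)

lemma Gv_eq_integral_gvIntegrand : Gv v x = ∫ t in Ioi 0, gvIntegrand v x t := rfl

lemma measurable_gvIntegrand : Measurable (gvIntegrand v x) := by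
  unfold gvIntegrand
  fun_prop

lemma norm_gvIntegrand_le {t R : ℝ} (ht : 0 ≤ t) (hR : 0 < R)
    (hRt : R ≤ (1 - ‖v‖ ^ 2) * t ^ 2 + ‖x‖ ^ 2) :
    ‖gvIntegrand v x t‖ ≤ Real.exp (-t) * t * R ^ (-(((d : ℝ) + 1) / 2)) := by
  rw [gvIntegrand, norm_mul, Complex.norm_real, norm_of_nonneg (by positivity)]
  gcongr
  refine Complex.norm_cpow_ofReal_le (by linarith [(d.cast_nonneg : (0 : ℝ) ≤ d)]) hR ?_
  simpa [← Complex.ofReal_pow] using hRt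

lemma norm_gvIntegrand_le_of_ne_zero (hv : ‖v‖ ≤ 1) (hx : x ≠ 0) {t : ℝ} (ht : 0 ≤ t) :
    ‖gvIntegrand v x t‖ ≤ Real.exp (-t) * t * ‖x‖ ^ (-((d : ℝ) + 1)) := by
  have ha : 0 ≤ 1 - ‖v‖ ^ 2 := by nlinarith [norm_nonneg v]
  rw [← sq_rpow_neg_half (norm_nonneg x)]
  exact norm_gvIntegrand_le v x ht (by positivity) (by nlinarith [sq_nonneg t])

lemma norm_gvIntegrand_le_of_pos (hv : ‖v‖ < 1) {t : ℝ} (ht : 0 < t) :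
    ‖gvIntegrand v x t‖ ≤
      (1 - ‖v‖ ^ 2) ^ (-(((d : ℝ) + 1) / 2)) * (Real.exp (-t) * t ^ (-(d : ℝ))) := by
  have ha : 0 < 1 - ‖v‖ ^ 2 := by nlinarith [norm_nonneg v]
  have h := norm_gvIntegrand_le v x ht.le (by positivity : 0 < (1 - ‖v‖ ^ 2) * t ^ 2)
    (le_add_of_nonneg_right (sq_nonneg ‖x‖))
  have hpow : t * t ^ (-((d : ℝ) + 1)) = t ^ (-(d : ℝ)) := by
    rw [show -(d : ℝ) = 1 + -((d : ℝ) + 1) by ring, rpow_add ht, rpow_one]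
  rw [mul_rpow ha.le (by positivity), sq_rpow_neg_half ht.le] at h
  exact h.trans_eq (by rw [← hpow]; ring)

lemma integrableOn_gvIntegrand (hv : ‖v‖ ≤ 1) (hx : x ≠ 0) :
    IntegrableOn (gvIntegrand v x) (Ioi 0) :=
  Integrable.mono' (integrableOn_exp_neg_mul_id.mul_const _)
    (measurable_gvIntegrand v x).aestronglyMeasurable
    (ae_restrict_of_forall_mem measurableSet_Ioi fun _ ht =>
      norm_gvIntegrand_le_of_ne_zero v x hv hx (le_of_lt ht))

lemma norm_Gv_le_rpow (hv : ‖v‖ ≤ 1) (hx : x ≠ 0) : ‖Gv v x‖ ≤ ‖x‖ ^ (-((d : ℝ) + 1)) :=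
  calc ‖Gv v x‖ ≤ ∫ t in Ioi 0, Real.exp (-t) * t * ‖x‖ ^ (-((d : ℝ) + 1)) :=
        norm_integral_le_of_norm_le (integrableOn_exp_neg_mul_id.mul_const _)
          (ae_restrict_of_forall_mem measurableSet_Ioi fun _ ht =>
            norm_gvIntegrand_le_of_ne_zero v x hv hx (le_of_lt ht))
    _ = ‖x‖ ^ (-((d : ℝ) + 1)) := by rw [integral_mul_const, integral_exp_neg_mul_id, one_mul]

lemma norm_setIntegral_Ioc_gvIntegrand_le (hv : ‖v‖ ≤ 1) (hx : x ≠ 0) :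
    ‖∫ t in Ioc 0 ‖x‖, gvIntegrand v x t‖ ≤ ‖x‖ ^ (1 - (d : ℝ)) / 2 := by
  have hr : 0 < ‖x‖ := norm_pos_iff.mpr hx
  calc ‖∫ t in Ioc 0 ‖x‖, gvIntegrand v x t‖
      ≤ ∫ t in Ioc 0 ‖x‖, t * ‖x‖ ^ (-((d : ℝ) + 1)) := by
        refine norm_integral_le_of_norm_le (continuous_id.mul continuous_const).integrableOn_Ioc
          (ae_restrict_of_forall_mem measurableSet_Ioc fun t ht => ?_)
        refine (norm_gvIntegrand_le_of_ne_zero v x hv hx ht.1.le).trans ?_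
        gcongr
        exact mul_le_of_le_one_left ht.1.le (exp_le_one_iff.mpr (by linarith [ht.1]))
    _ = ‖x‖ ^ (1 - (d : ℝ)) / 2 := by
        rw [integral_mul_const, ← intervalIntegral.integral_of_le hr.le, integral_id,
          zero_pow two_ne_zero, sub_zero, div_mul_eq_mul_div, ← rpow_two, ← rpow_add hr]
        ring_nf

lemma norm_setIntegral_Ioi_gvIntegrand_le (hv : ‖v‖ < 1) (hx : x ≠ 0) :
    ‖∫ t in Ioi ‖x‖, gvIntegrand v x t‖ ≤
      (1 - ‖v‖ ^ 2) ^ (-(((d : ℝ) + 1) / 2)) * ∫ t in Ioi ‖x‖, Real.exp (-t) * t ^ (-(d : ℝ)) := by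
  have hr : 0 < ‖x‖ := norm_pos_iff.mpr hx
  rw [← integral_const_mul]
  exact norm_integral_le_of_norm_le
    ((integrableOn_exp_neg_mul_rpow_neg hr d.cast_nonneg).const_mul _)
    (ae_restrict_of_forall_mem measurableSet_Ioi fun t (ht : ‖x‖ < t) =>
      norm_gvIntegrand_le_of_pos v x hv (hr.trans ht))

lemma norm_Gv_le (hv : ‖v‖ < 1) (hx : x ≠ 0) :
    ‖Gv v x‖ ≤ ‖x‖ ^ (1 - (d : ℝ)) / 2 +
      (1 - ‖v‖ ^ 2) ^ (-(((d : ℝ) + 1) / 2)) * ∫ t in Ioi ‖x‖, Real.exp (-t) * t ^ (-(d : ℝ)) := by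
  have hr : 0 ≤ ‖x‖ := norm_nonneg x
  have hint := integrableOn_gvIntegrand v x hv.le hx
  rw [Gv_eq_integral_gvIntegrand, ← Ioc_union_Ioi_eq_Ioi hr,
    setIntegral_union (Ioc_disjoint_Ioi le_rfl) measurableSet_Ioi
      (hint.mono_set Ioc_subset_Ioi_self) (hint.mono_set (Ioi_subset_Ioi hr))]
  exact (norm_add_le _ _).trans (add_le_add (norm_setIntegral_Ioc_gvIntegrand_le v x hv.le hx)
    (norm_setIntegral_Ioi_gvIntegrand_le v x hv hx))

end Kernel

theorem resolvent_kernel_bounds_general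
    (d : ℕ) (v : Ed d) (hv : ‖v‖ < 1) :
    ∃ C : ℝ, 0 < C ∧
      (∀ x : Ed d, 1 ≤ ‖x‖ → ‖Gv v x‖ ≤ C * ‖x‖ ^ (-((d : ℝ) + 1))) ∧
      (2 ≤ d → ∀ x : Ed d, x ≠ 0 → ‖Gv v x‖ ≤ C * ‖x‖ ^ (-((d : ℝ) - 1))) ∧
      (d = 1 → ∀ x : Ed d, x ≠ 0 → ‖Gv v x‖ ≤ C * (1 + |Real.log ‖x‖|)) := by
  set A := (1 - ‖v‖ ^ 2) ^ (-(((d : ℝ) + 1) / 2))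
  have hA : 0 < A := rpow_pos_of_pos (by nlinarith [norm_nonneg v]) _
  refine ⟨1 + A, by positivity, fun x hx => ?_, fun hd x hx => ?_, fun hd x hx => ?_⟩
  · have hx0 : x ≠ 0 := norm_pos_iff.mp (one_pos.trans_le hx)
    exact (norm_Gv_le_rpow v x hv.le hx0).trans
      (le_mul_of_one_le_left (rpow_nonneg (norm_nonneg x) _) (by linarith))
  · have hr : 0 < ‖x‖ := norm_pos_iff.mpr hx
    have hd' : (2 : ℝ) ≤ d := by exact_mod_cast hd
    have hpow : 0 ≤ ‖x‖ ^ (1 - (d : ℝ)) := rpow_nonneg hr.le _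
    calc ‖Gv v x‖ ≤ ‖x‖ ^ (1 - (d : ℝ)) / 2 + A * (‖x‖ ^ (1 - (d : ℝ)) / ((d : ℝ) - 1)) := by
          grw [norm_Gv_le v x hv hx, integral_exp_neg_mul_rpow_neg_le hr (by linarith)]
      _ ≤ ‖x‖ ^ (1 - (d : ℝ)) / 2 + A * ‖x‖ ^ (1 - (d : ℝ)) := by
          gcongr
          exact div_le_self hpow (by linarith)
      _ ≤ (1 + A) * ‖x‖ ^ (-((d : ℝ) - 1)) := by
          rw [neg_sub]
          nlinarith
  · subst hd
    have hr : 0 < ‖x‖ := norm_pos_iff.mpr hx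
    calc ‖Gv v x‖ ≤ ‖x‖ ^ (1 - ((1 : ℕ) : ℝ)) / 2 +
          A * ∫ t in Ioi ‖x‖, Real.exp (-t) * t ^ (-((1 : ℕ) : ℝ)) := norm_Gv_le v x hv hx
      _ = 1 / 2 + A * ∫ t in Ioi ‖x‖, Real.exp (-t) * t⁻¹ := by
          simp only [Nat.cast_one, sub_self, rpow_zero, rpow_neg_one]
      _ ≤ 1 / 2 + A * (1 + |Real.log ‖x‖|) := by grw [integral_exp_neg_mul_inv_le hr]
      _ ≤ (1 + A) * (1 + |Real.log ‖x‖|) := by nlinarith [abs_nonneg (Real.log ‖x‖)]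

/-- Pointwise bounds for the resolvent kernel `G_v`, `|v| < 1`:
`|G_v(x)| ≲ |x|^{-(d+1)}` for `|x| ≥ 1`, and for all `x ≠ 0`,
`|G_v(x)| ≲ |x|^{-(d-1)}` when `d ≥ 2`, resp. `|G_v(x)| ≲ 1 + |log|x||` when `d = 1`. -/
theorem resolvent_kernel_bounds
    (d : ℕ) (hd : 1 ≤ d) (v : Ed d) (hv : ‖v‖ < 1) :
    ∃ C : ℝ, 0 < C ∧
      (∀ x : Ed d, 1 ≤ ‖x‖ → ‖Gv v x‖ ≤ C * ‖x‖ ^ (-((d : ℝ) + 1))) ∧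
      (2 ≤ d → ∀ x : Ed d, x ≠ 0 → ‖Gv v x‖ ≤ C * ‖x‖ ^ (-((d : ℝ) - 1))) ∧
      (d = 1 → ∀ x : Ed d, x ≠ 0 → ‖Gv v x‖ ≤ C * (1 + |Real.log ‖x‖|)) :=
  resolvent_kernel_bounds_general d v hv
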